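/- Let T1, T2, T* be trees on the same label set 𝒳 and d' ≤ d nonnegative integers. Suppose d < d_LR(T1, T2) ≤ d' + d, that there are X1, X2 ⊆ 𝒳 with T1 − X1 = T* − X1, T2 − X2 = T* − X2, |X1| ≤ d', |X2| ≤ d, and let x ∈ X1 \ X2. Then there is a set P of trees on label set 𝒳 with |P| ≤ 18(d + d') + 8 such that every tree T' satisfying d_LR(T', T*) < d_LR(T1, T*) that can be obtained from T1 by pruning the leaf x and regrafting it belongs to P. -/

import Mathlib

/-!
Common framework: rooted binary trees with leaves bijectively labeled by a
finite label set, leaf removal, restriction, the leaf-removal distance `d_LR`,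
compatibility, leaf-disagreements, triplets, LPR moves, etc.
-/

universe u

/-- A rooted binary tree whose leaves carry labels from `α`. -/
inductive LTree (α : Type u) : Type u where
  | leaf : α → LTree α
  | node : LTree α → LTree α → LTree α

namespace LTree

variable {α : Type u} [DecidableEq α]

/-- The set of leaf labels of a tree. -/
def labels : LTree α → Finset α
  | leaf a => {a}
  | node l r => labels l ∪ labels r

/-- A tree is `Good` when its leaves carry pairwise distinct labels
(i.e. the leaves are bijectively labeled). -/
def Good : LTree α → Prop
  | leaf _ => True
  | node l r => Good l ∧ Good r ∧ Disjoint (labels l) (labels r)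

/-- `T` is a (rooted binary, uniquely leaf-labeled) tree on label set `𝒳`. -/
def IsTreeOn (T : LTree α) (𝒳 : Finset α) : Prop :=
  Good T ∧ labels T = 𝒳

/-- Equality of rooted trees: children of a node are unordered. -/
inductive Iso : LTree α → LTree α → Prop
  | leaf (a : α) : Iso (leaf a) (leaf a)
  | node {l₁ r₁ l₂ r₂ : LTree α} :
      Iso l₁ l₂ → Iso r₁ r₂ → Iso (node l₁ r₁) (node l₂ r₂)
  | swap {l₁ r₁ l₂ r₂ : LTree α} :
      Iso l₁ r₂ → Iso r₁ l₂ → Iso (node l₁ r₁) (node l₂ r₂)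

/-- Equality of possibly empty trees (`none` is the empty tree). -/
def OptIso : Option (LTree α) → Option (LTree α) → Prop
  | none, none => True
  | some t₁, some t₂ => Iso t₁ t₂
  | _, _ => False

/-- Restriction `T|_S`: keep exactly the leaves with labels in `S`, suppressing
the resulting degree-two vertices and degree-one roots; the result is `none`
when no leaf survives. -/
def restrict : LTree α → Finset α → Option (LTree α)
  | leaf a, S => if a ∈ S then some (leaf a) else none
  | node l r, S =>
    match restrict l S, restrict r S with
    | some l', some r' => some (node l' r')
    | some l', none => some l'
    | none, some r' => some r'
    | none, none => none

/-- `T − X`: remove from `T` every leaf whose label lies in `X`. -/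
def remove (T : LTree α) (X : Finset α) : Option (LTree α) :=
  restrict T (labels T \ X)

/-- The leaf-removal distance `d_LR(T₁,T₂)`: the minimum number of labels
whose removal makes the two trees equal. -/
noncomputable def dLR (T₁ T₂ : LTree α) : ℕ :=
  sInf {n | ∃ X : Finset α, X ⊆ labels T₁ ∪ labels T₂ ∧ X.card = n ∧
    OptIso (remove T₁ X) (remove T₂ X)}

def labelsO : Option (LTree α) → Finset α
  | none => ∅
  | some t => labels t

def GoodO : Option (LTree α) → Prop
  | none => True
  | some t => Good t

def restrictO : Option (LTree α) → Finset α → Option (LTree α)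
  | none, _ => none
  | some t, S => restrict t S

/-- A family of (possibly empty) trees is compatible if there is a single tree,
on the union of their label sets, which displays all of them. -/
def CompatibleFamO {ι : Type*} (f : ι → Option (LTree α)) : Prop :=
  ∃ TO : Option (LTree α), GoodO TO ∧
    (↑(labelsO TO) : Set α) = (⋃ i, ↑(labelsO (f i))) ∧
    ∀ i, OptIso (restrictO TO (labelsO (f i))) (f i)

/-- A family of trees is compatible if a single tree displays all of them. -/
def CompatibleFam {ι : Type*} (𝒯 : ι → LTree α) : Prop :=
  CompatibleFamO fun i => some (𝒯 i)

/-- `X` is a leaf-disagreement for the family `𝒯`: removing `X i` from `𝒯 i`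
yields a compatible family. -/
def IsLeafDisagreement {ι : Type*} (𝒯 : ι → LTree α) (X : ι → Finset α) : Prop :=
  CompatibleFamO fun i => remove (𝒯 i) (X i)

/-- `X'` is a label-disagreement for the family `𝒯`. -/
def IsLabelDisagreement {ι : Type*} (𝒯 : ι → LTree α) (X' : Finset α) : Prop :=
  CompatibleFamO fun i => remove (𝒯 i) X'

/-- `MASTRL 𝒯`: the minimum size of a leaf-disagreement for `𝒯`. -/
noncomputable def MASTRL {t : ℕ} (𝒯 : Fin t → LTree α) : ℕ :=
  sInf {v | ∃ X : Fin t → Finset α, (∀ i, X i ⊆ labels (𝒯 i)) ∧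
    (∑ i, (X i).card) = v ∧ IsLeafDisagreement 𝒯 X}

/-- The triplet `ab|c` (as a tree). -/
def tripletTree (a b c : α) : LTree α := node (node (leaf a) (leaf b)) (leaf c)

/-- A rooted triplet: a tree with exactly three (distinctly labeled) leaves. -/
def IsTriplet (R : LTree α) : Prop := Good R ∧ (labels R).card = 3

/-- `ab|c` is a triplet of `T`, i.e. `T|_{a,b,c} = ab|c`. -/
def IsTripletOf (T : LTree α) (a b c : α) : Prop :=
  OptIso (restrict T {a, b, c}) (some (tripletTree a b c))

/-- `tr(T)`: the triplet decomposition of `T`. -/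
def trSet (T : LTree α) : Set (LTree α) :=
  {R | ∃ a b c : α, R = tripletTree a b c ∧ IsTripletOf T a b c}

/-- A set of trees is compatible: some tree on the union of the label sets
displays every member. -/
def CompatibleSet (S : Set (LTree α)) : Prop :=
  ∃ TO : Option (LTree α), GoodO TO ∧
    (↑(labelsO TO) : Set α) = (⋃ R ∈ S, ↑(labels R)) ∧
    ∀ R ∈ S, OptIso (restrictO TO (labels R)) (some R)

/-- `MINRTI ℛ`: the minimum number of triplets to delete from `ℛ` so that the
remaining triplets are compatible. -/
noncomputable def MINRTI {t : ℕ} (R : Fin t → LTree α) : ℕ :=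
  sInf {m | ∃ s : Finset (Fin t), s.card = m ∧
    CompatibleFam (fun i : {i : Fin t // i ∉ s} => R i.1)}

/-- Graft the leaf `x` at the position (edge) addressed by `p` in `T`.
The empty address grafts `x` above the root of `T` (the `⊥` case); the address
of an internal/leaf vertex `v` grafts `x` on the edge between `v` and its
parent.  `none` when the address is invalid. -/
def graftAt (x : α) : LTree α → List Bool → Option (LTree α)
  | T, [] => some (node (leaf x) T)
  | leaf _, _ :: _ => none
  | node l r, b :: p =>
    if b then (graftAt x l p).map (fun l' => node l' r)
    else (graftAt x r p).map (fun r' => node l r')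

/-- `T'` is obtained from `T` by a single LPR (leaf prune-and-regraft) move on
the leaf `x`: prune `x` from `T` and regraft it, either on an edge of
`T − {x}` or above its root. -/
def LPRStep (x : α) (T T' : LTree α) : Prop :=
  (remove T {x} = none ∧ T' = leaf x) ∨
  ∃ T₀ p, remove T {x} = some T₀ ∧ graftAt x T₀ p = some T'

/-- `TurnsInto L T T'`: the LPR sequence with (ordered) leaf list `L` turns
`T` into `T'`. -/
inductive TurnsInto : List α → LTree α → LTree α → Prop
  | nil {T T' : LTree α} : Iso T T' → TurnsInto [] T T'
  | cons {x : α} {xs : List α} {T T'' T' : LTree α} :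
      LPRStep x T T'' → TurnsInto xs T'' T' → TurnsInto (x :: xs) T T'

/-- `confset(T₁,T₂)`: the collection of 3-label sets `{a,b,c}` such that
`T₁` contains a triplet on `{a,b,c}` conflicting with a triplet of `T₂`. -/
def confset (T₁ T₂ : LTree α) : Set (Finset α) :=
  {s | ∃ a b c : α, s = {a, b, c} ∧ IsTripletOf T₁ a b c ∧
    (IsTripletOf T₂ a c b ∨ IsTripletOf T₂ b c a)}

/-- `X` is a minimal disagreement between `T₁` and `T₂`. -/
def MinimalDisagreement (T₁ T₂ : LTree α) (X : Finset α) : Prop :=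
  X ⊆ labels T₁ ∪ labels T₂ ∧
  OptIso (remove T₁ X) (remove T₂ X) ∧
  ∀ X' ⊂ X, ¬ OptIso (remove T₁ X') (remove T₂ X')

/-- `u` is (the rooted subtree hanging at) a node of `T`. -/
inductive IsSubtree : LTree α → LTree α → Prop
  | refl (T : LTree α) : IsSubtree T T
  | left {u l r : LTree α} : IsSubtree u l → IsSubtree u (node l r)
  | right {u l r : LTree α} : IsSubtree u r → IsSubtree u (node l r)

/-- `u` is the least common ancestor in `T` of the labels in `Z`. -/
def IsLCA (T : LTree α) (Z : Finset α) (u : LTree α) : Prop :=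
  IsSubtree u T ∧ Z ⊆ labels u ∧
    ∀ w, IsSubtree w T → Z ⊆ labels w → IsSubtree u w

end LTree

/-!
Write `T₀ = T₁ − {x}`, so that pruning and regrafting `x` means grafting `x` onto `T₀` at some
address. If the result `T'` is closer to `T*` than `T₁` is, an optimal removal set for `(T', T*)`
avoids `x`, since removing `x` undoes the move. So if `q₀` and `p` are two such addresses, the
union `Z` of their optimal removal sets has at most `2 d_LR(T₁, T*) ≤ 2d'` labels, avoids `x`,
and the two grafts coincide once `Z` is deleted. The number `cost T₀ q₀ p` is a lower bound for
`|Z|` computed by recursion on `T₀`, and the same recursion shows that at most `7m + 3` addresses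
`p` satisfy `cost T₀ q₀ p ≤ m`. Grafting at those addresses gives at most `14d' + 3` candidate
trees.
-/

namespace Finset

open scoped Finset

theorem card_filter_min_le {β : Type*} (A : Finset β) (a m : ℕ) (g : β → ℕ) :
    #(A.filter fun q => min a (g q) ≤ m) ≤
      if a ≤ m then #A else #(A.filter fun q => g q ≤ m) := by
  split_ifs with ha
  · exact Finset.card_filter_le _ _
  · exact Finset.card_le_card (Finset.monotone_filter_right _ fun q _ h => by omega)

theorem card_filter_min_add_le {β : Type*} (A : Finset β) (a s m : ℕ) (f : β → ℕ) :
    #(A.filter fun q => min a (s + f q) ≤ m) ≤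
      if a ≤ m then #A else if s ≤ m then #(A.filter fun q => f q ≤ m - s) else 0 := by
  refine (card_filter_min_le A a m _).trans ?_
  split_ifs with ha hs
  · exact le_rfl
  · exact Finset.card_le_card (Finset.monotone_filter_right _ fun q _ h => by omega)
  · rw [Finset.card_eq_zero.mpr (Finset.filter_eq_empty_iff.mpr fun q _ => by omega)]

end Finset

namespace LTree

open scoped Finset

section

variable {α : Type u}

theorem Iso.refl : ∀ T : LTree α, Iso T T
  | .leaf a => .leaf a
  | .node l r => .node (Iso.refl l) (Iso.refl r)

theorem Iso.symm {a b : LTree α} (h : Iso a b) : Iso b a := by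
  induction h with
  | leaf a => exact .leaf a
  | node _ _ ih₁ ih₂ => exact .node ih₁ ih₂
  | swap _ _ ih₁ ih₂ => exact .swap ih₂ ih₁

theorem Iso.trans {a b c : LTree α} (hab : Iso a b) (hbc : Iso b c) : Iso a c := by
  induction hab generalizing c with
  | leaf => exact hbc
  | node _ _ ih₁ ih₂ =>
    cases hbc with
    | node g₁ g₂ => exact .node (ih₁ g₁) (ih₂ g₂)
    | swap g₁ g₂ => exact .swap (ih₁ g₁) (ih₂ g₂)
  | swap _ _ ih₁ ih₂ =>
    cases hbc with
    | node g₁ g₂ => exact .swap (ih₁ g₂) (ih₂ g₁)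
    | swap g₁ g₂ => exact .node (ih₁ g₂) (ih₂ g₁)

theorem OptIso.symm {o₁ o₂ : Option (LTree α)} (h : OptIso o₁ o₂) : OptIso o₂ o₁ := by
  cases o₁ <;> cases o₂ <;> first | exact h | exact Iso.symm h

theorem OptIso.trans {o₁ o₂ o₃ : Option (LTree α)} (h : OptIso o₁ o₂) (h' : OptIso o₂ o₃) :
    OptIso o₁ o₃ := by
  cases o₁ <;> cases o₂ <;> cases o₃ <;>
    first | exact h | exact h' | trivial | exact Iso.trans h h'

theorem graftAt_nil (x : α) (T : LTree α) : graftAt x T [] = some (node (leaf x) T) := by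
  cases T <;> rfl

theorem graftAt_node_true {x : α} {l r G : LTree α} {p : List Bool}
    (h : graftAt x (node l r) (true :: p) = some G) :
    ∃ lp, graftAt x l p = some lp ∧ G = node lp r := by
  simpa [graftAt, eq_comm] using h

theorem graftAt_node_false {x : α} {l r G : LTree α} {p : List Bool}
    (h : graftAt x (node l r) (false :: p) = some G) :
    ∃ rp, graftAt x r p = some rp ∧ G = node l rp := by
  simpa [graftAt, eq_comm] using h

def flipHead : List Bool → List Bool
  | [] => []
  | b :: p => (!b) :: p

theorem flipHead_injective : Function.Injective flipHead :=
  Function.Involutive.injective fun p => by cases p <;> simp [flipHead]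

theorem graftAt_node_flipHead {x : α} {l r G : LTree α} {p : List Bool}
    (h : graftAt x (node l r) p = some G) :
    ∃ G', graftAt x (node r l) (flipHead p) = some G' ∧ Iso G G' := by
  rcases p with _ | ⟨_ | _, p⟩
  · cases h
    exact ⟨_, rfl, .node (.refl _) (.swap (.refl _) (.refl _))⟩
  · obtain ⟨rp, hrp, rfl⟩ := graftAt_node_false h
    exact ⟨node rp l, by simp [flipHead, graftAt, hrp], .swap (.refl _) (.refl _)⟩
  · obtain ⟨lp, hlp, rfl⟩ := graftAt_node_true h
    exact ⟨node r lp, by simp [flipHead, graftAt, hlp], .swap (.refl _) (.refl _)⟩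

def addresses : LTree α → Finset (List Bool)
  | leaf _ => {[]}
  | node l r =>
    insert [] ((addresses l).image (List.cons true) ∪ (addresses r).image (List.cons false))

theorem mem_addresses_of_graftAt {x : α} {T G : LTree α} {p : List Bool}
    (h : graftAt x T p = some G) : p ∈ addresses T := by
  fun_induction graftAt x T p generalizing G with
  | case1 T => cases T <;> simp [addresses]
  | case2 => cases h
  | case3 l r p ih =>
    obtain ⟨lp, hlp, -⟩ := Option.map_eq_some_iff.mp h
    simp [addresses, ih hlp]
  | case4 l r b p hb ih =>
    obtain ⟨rp, hrp, -⟩ := Option.map_eq_some_iff.mp h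
    simp [addresses, ih hrp, Bool.eq_false_iff.mpr hb]

theorem addresses_node_swap (l r : LTree α) :
    addresses (node r l) = (addresses (node l r)).image flipHead := by
  simp [addresses, Finset.image_insert, Finset.image_union, Finset.image_image, flipHead,
    Function.comp_def, Finset.union_comm]

theorem card_filter_addresses_node (l r : LTree α) (P : List Bool → Prop) [DecidablePred P] :
    #((addresses (node l r)).filter P) ≤ (if P [] then 1 else 0) +
      #((addresses l).filter fun q => P (true :: q)) +
      #((addresses r).filter fun q => P (false :: q)) := by
  rw [addresses, Finset.filter_insert, Finset.filter_union, Finset.filter_image,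
    Finset.filter_image]
  have hunion (A B : Finset (List Bool)) :
      #(A.image (List.cons true) ∪ B.image (List.cons false)) ≤ #A + #B :=
    (Finset.card_union_le _ _).trans (add_le_add Finset.card_image_le Finset.card_image_le)
  split_ifs
  · exact (Finset.card_insert_le _ _).trans (by grind)
  · grind

end

variable {α : Type u} [DecidableEq α]

theorem labels_nonempty : ∀ T : LTree α, (labels T).Nonempty
  | leaf a => ⟨a, Finset.mem_singleton_self a⟩
  | node l _ => (labels_nonempty l).mono Finset.subset_union_left

theorem Iso.labels_eq {a b : LTree α} (h : Iso a b) : labels a = labels b := by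
  induction h with
  | leaf => rfl
  | node _ _ ih₁ ih₂ => simp [labels, ih₁, ih₂]
  | swap _ _ ih₁ ih₂ => simp [labels, ih₁, ih₂, Finset.union_comm]

theorem Iso.not_of_disjoint {a b : LTree α} (h : Disjoint (labels a) (labels b)) :
    ¬ Iso a b := by
  intro hab
  rw [hab.labels_eq, disjoint_self, Finset.bot_eq_empty] at h
  exact (labels_nonempty b).ne_empty h

theorem Iso.not_of_mem_of_not_mem {a b : LTree α} {x : α} (ha : x ∈ labels a)
    (hb : x ∉ labels b) : ¬ Iso a b :=
  fun hab => hb (hab.labels_eq ▸ ha)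

theorem labelsO_restrict :
    ∀ (T : LTree α) (S : Finset α), labelsO (restrict T S) = labels T ∩ S
  | leaf a, S => by by_cases ha : a ∈ S <;> simp [restrict, labelsO, labels, ha]
  | node l r, S => by
    rw [labels, Finset.union_inter_distrib_right, ← labelsO_restrict l S, ← labelsO_restrict r S]
    simp only [restrict]
    cases restrict l S <;> cases restrict r S <;> simp [labelsO, labels]

theorem labels_restrict {T u : LTree α} {S : Finset α} (h : restrict T S = some u) :
    labels u = labels T ∩ S := by
  simpa [h, labelsO] using labelsO_restrict T S

theorem restrict_eq_none_iff {T : LTree α} {S : Finset α} :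
    restrict T S = none ↔ Disjoint (labels T) S := by
  rw [Finset.disjoint_iff_inter_eq_empty, ← labelsO_restrict]
  cases h : restrict T S with
  | none => simp [labelsO]
  | some u => simpa [labelsO] using (labels_nonempty u).ne_empty

theorem good_restrict {T u : LTree α} (hT : Good T) {S : Finset α} (h : restrict T S = some u) :
    Good u := by
  induction T generalizing u with
  | leaf a =>
    by_cases ha : a ∈ S <;> simp [restrict, ha] at h
    subst h; trivial
  | node l r ihl ihr =>
    obtain ⟨gl, gr, hlr⟩ := hT
    rcases hl : restrict l S with _ | l' <;> rcases hr : restrict r S with _ | r' <;>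
      simp only [restrict, hl, hr, reduceCtorEq, Option.some.injEq] at h <;> subst h
    · exact ihr gr hr
    · exact ihl gl hl
    · refine ⟨ihl gl hl, ihr gr hr, ?_⟩
      rw [labels_restrict hl, labels_restrict hr]
      exact hlr.mono Finset.inter_subset_left Finset.inter_subset_left

theorem restrict_congr {S S' : Finset α} :
    ∀ T : LTree α, labels T ∩ S = labels T ∩ S' → restrict T S = restrict T S'
  | leaf a, h => by
    have : a ∈ S ↔ a ∈ S' := by simpa [labels] using Finset.ext_iff.mp h a
    simp [restrict, this]
  | node l r, h => by
    have hsub : ∀ t : LTree α, labels t ⊆ labels (node l r) → labels t ∩ S = labels t ∩ S' :=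
      fun t ht => by rw [← Finset.inter_eq_left.mpr ht, Finset.inter_assoc, h, Finset.inter_assoc]
    simp [restrict, restrict_congr l (hsub l Finset.subset_union_left),
      restrict_congr r (hsub r Finset.subset_union_right)]

theorem restrict_insert_of_not_mem {T : LTree α} {x : α} (hx : x ∉ labels T) (S : Finset α) :
    restrict T (insert x S) = restrict T S :=
  restrict_congr T (by rw [Finset.inter_insert_of_notMem hx])

theorem restrictO_restrict : ∀ (T : LTree α) (S S' : Finset α),
    restrictO (restrict T S) S' = restrict T (S ∩ S')
  | leaf a, S, S' => by
    by_cases ha : a ∈ S <;> by_cases ha' : a ∈ S' <;> simp [restrict, restrictO, ha, ha']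
  | node l r, S, S' => by
    simp only [restrict, ← restrictO_restrict l S S', ← restrictO_restrict r S S']
    cases restrict l S <;> cases restrict r S <;> simp only [restrictO, restrict] <;> split <;>
      simp_all

theorem Iso.restrict {a b : LTree α} (h : Iso a b) (S : Finset α) :
    OptIso (LTree.restrict a S) (LTree.restrict b S) := by
  induction h with
  | leaf a => by_cases ha : a ∈ S <;> simp [LTree.restrict, ha, OptIso, Iso.refl]
  | @node l₁ r₁ l₂ r₂ _ _ ih₁ ih₂ =>
    simp only [LTree.restrict]
    revert ih₁ ih₂
    cases LTree.restrict l₁ S <;> cases LTree.restrict l₂ S <;> cases LTree.restrict r₁ S <;>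
      cases LTree.restrict r₂ S <;> intro h₁ h₂ <;>
      first | exact .node h₁ h₂ | exact h₁ | exact h₂ | trivial
  | @swap l₁ r₁ l₂ r₂ _ _ ih₁ ih₂ =>
    simp only [LTree.restrict]
    revert ih₁ ih₂
    cases LTree.restrict l₁ S <;> cases LTree.restrict l₂ S <;> cases LTree.restrict r₁ S <;>
      cases LTree.restrict r₂ S <;> intro h₁ h₂ <;>
      first | exact .swap h₁ h₂ | exact h₁ | exact h₂ | trivial

theorem OptIso.restrictO {o₁ o₂ : Option (LTree α)} (h : OptIso o₁ o₂) (S : Finset α) :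
    OptIso (LTree.restrictO o₁ S) (LTree.restrictO o₂ S) := by
  cases o₁ <;> cases o₂
  · trivial
  · exact h.elim
  · exact h.elim
  · exact Iso.restrict h S

theorem labels_subset_of_restrict {T u : LTree α} {S : Finset α} (h : restrict T S = some u) :
    labels u ⊆ labels T :=
  (labels_restrict h).trans_subset Finset.inter_subset_left

theorem remove_eq_none_iff {T : LTree α} {X : Finset α} :
    remove T X = none ↔ labels T ⊆ X := by
  rw [remove, restrict_eq_none_iff, Finset.disjoint_iff_inter_eq_empty,
    Finset.inter_eq_right.mpr Finset.sdiff_subset, Finset.sdiff_eq_empty_iff_subset]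

theorem remove_eq_restrictO_remove (T : LTree α) {X Z : Finset α} (hXZ : X ⊆ Z) :
    remove T Z = restrictO (remove T X) (labels T \ Z) := by
  rw [remove, remove, restrictO_restrict,
    Finset.inter_eq_right.mpr (Finset.sdiff_subset_sdiff subset_rfl hXZ)]

theorem labels_remove {T T₀ : LTree α} {X : Finset α} (h : remove T X = some T₀) :
    labels T₀ = labels T \ X := by
  rw [labels_restrict h, Finset.inter_eq_right.mpr Finset.sdiff_subset]

theorem remove_of_remove_eq_some {T T₀ : LTree α} {Y : Finset α} (h : remove T Y = some T₀)
    (X : Finset α) : remove T₀ X = remove T (Y ∪ X) := by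
  calc remove T₀ X = restrictO (restrict T (labels T \ Y)) (labels T₀ \ X) := by
        rw [show restrict T (labels T \ Y) = some T₀ from h]; rfl
    _ = remove T (Y ∪ X) := by
        rw [restrictO_restrict, labels_remove h, Finset.inter_eq_right.mpr Finset.sdiff_subset,
          sdiff_sdiff_left, remove]; rfl

theorem OptIso.remove_mono {A B : LTree α} (hAB : labels A = labels B) {X Z : Finset α}
    (hXZ : X ⊆ Z) (h : OptIso (remove A X) (remove B X)) : OptIso (remove A Z) (remove B Z) := by
  rw [remove_eq_restrictO_remove A hXZ, remove_eq_restrictO_remove B hXZ, hAB]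
  exact h.restrictO _

theorem dLR_le {T₁ T₂ : LTree α} {X : Finset α} (hX : X ⊆ labels T₁ ∪ labels T₂)
    (h : OptIso (remove T₁ X) (remove T₂ X)) : dLR T₁ T₂ ≤ #X :=
  Nat.sInf_le ⟨X, hX, rfl, h⟩

theorem exists_card_eq_dLR (T₁ T₂ : LTree α) : ∃ X : Finset α, X ⊆ labels T₁ ∪ labels T₂ ∧
    #X = dLR T₁ T₂ ∧ OptIso (remove T₁ X) (remove T₂ X) := by
  have hall :
      OptIso (remove T₁ (labels T₁ ∪ labels T₂)) (remove T₂ (labels T₁ ∪ labels T₂)) := by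
    rw [remove_eq_none_iff.mpr Finset.subset_union_left,
      remove_eq_none_iff.mpr Finset.subset_union_right]
    trivial
  exact Nat.sInf_mem (s := {n | ∃ X : Finset α, X ⊆ labels T₁ ∪ labels T₂ ∧ #X = n ∧
    OptIso (remove T₁ X) (remove T₂ X)}) ⟨_, _, subset_rfl, rfl, hall⟩

theorem labels_graftAt {x : α} {T G : LTree α} {p : List Bool} (h : graftAt x T p = some G) :
    labels G = insert x (labels T) := by
  fun_induction graftAt x T p generalizing G with
  | case1 => cases h; simp [labels]
  | case2 => cases h
  | case3 l r p ih =>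
    obtain ⟨lp, hlp, rfl⟩ := Option.map_eq_some_iff.mp h
    simp [labels, ih hlp, Finset.insert_union]
  | case4 l r b p hb ih =>
    obtain ⟨rp, hrp, rfl⟩ := Option.map_eq_some_iff.mp h
    simp [labels, ih hrp]

theorem good_graftAt {x : α} {T G : LTree α} {p : List Bool} (hT : Good T) (hx : x ∉ labels T)
    (h : graftAt x T p = some G) : Good G := by
  fun_induction graftAt x T p generalizing G with
  | case1 => cases h; exact ⟨trivial, hT, by simpa [labels] using hx⟩
  | case2 => cases h
  | case3 l r p ih =>
    obtain ⟨lp, hlp, rfl⟩ := Option.map_eq_some_iff.mp h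
    obtain ⟨gl, gr, hlr⟩ := hT
    simp only [labels, Finset.mem_union, not_or] at hx
    exact ⟨ih gl hx.1 hlp, gr, by simp [labels_graftAt hlp, hx.2, hlr]⟩
  | case4 l r b p hb ih =>
    obtain ⟨rp, hrp, rfl⟩ := Option.map_eq_some_iff.mp h
    obtain ⟨gl, gr, hlr⟩ := hT
    simp only [labels, Finset.mem_union, not_or] at hx
    exact ⟨gl, ih gr hx.2 hrp, by simp [labels_graftAt hrp, hx.1, hlr]⟩

theorem restrict_graftAt_of_not_mem {x : α} {T G : LTree α} {p : List Bool}
    (h : graftAt x T p = some G) {S : Finset α} (hxS : x ∉ S) : restrict G S = restrict T S := by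
  fun_induction graftAt x T p generalizing G with
  | case1 T =>
    cases h
    simp only [restrict, hxS, if_false]
    cases restrict T S <;> rfl
  | case2 => cases h
  | case3 l r p ih =>
    obtain ⟨lp, hlp, rfl⟩ := Option.map_eq_some_iff.mp h
    simp [restrict, ih hlp]
  | case4 l r b p hb ih =>
    obtain ⟨rp, hrp, rfl⟩ := Option.map_eq_some_iff.mp h
    simp [restrict, ih hrp]

theorem exists_restrict_graftAt_insert {x : α} {T G : LTree α} {p : List Bool}
    (h : graftAt x T p = some G) (S : Finset α) :
    ∃ g, restrict G (insert x S) = some g ∧ x ∈ labels g := by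
  obtain ⟨g, hg⟩ : ∃ g, restrict G (insert x S) = some g :=
    Option.ne_none_iff_exists'.mp fun hnone => Finset.disjoint_left.mp
      (restrict_eq_none_iff.mp hnone) (by simp [labels_graftAt h]) (Finset.mem_insert_self x S)
  exact ⟨g, hg, by simp [labels_restrict hg, labels_graftAt h]⟩

theorem restrict_graftAt_insert_of_disjoint {x : α} {T G : LTree α} {p : List Bool}
    (h : graftAt x T p = some G) (hx : x ∉ labels T) {S : Finset α}
    (hS : Disjoint (labels T) S) : restrict G (insert x S) = some (leaf x) := by
  fun_induction graftAt x T p generalizing G with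
  | case1 T =>
    cases h
    have hT : restrict T (insert x S) = none := by
      rw [restrict_eq_none_iff, Finset.disjoint_insert_right]; exact ⟨hx, hS⟩
    simp [restrict, hT]
  | case2 => cases h
  | case3 l r p ih =>
    obtain ⟨lp, hlp, rfl⟩ := Option.map_eq_some_iff.mp h
    simp only [labels, Finset.mem_union, not_or, Finset.disjoint_union_left] at hx hS
    have hr : restrict r (insert x S) = none := by
      rw [restrict_eq_none_iff, Finset.disjoint_insert_right]; exact ⟨hx.2, hS.2⟩
    simp [restrict, hr, ih hlp hx.1 hS.1]
  | case4 l r b p hb ih =>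
    obtain ⟨rp, hrp, rfl⟩ := Option.map_eq_some_iff.mp h
    simp only [labels, Finset.mem_union, not_or, Finset.disjoint_union_left] at hx hS
    have hl : restrict l (insert x S) = none := by
      rw [restrict_eq_none_iff, Finset.disjoint_insert_right]; exact ⟨hx.1, hS.1⟩
    simp [restrict, hl, ih hrp hx.2 hS.2]

theorem restrict_insert_node_leaf {x : α} {T u : LTree α} (hx : x ∉ labels T) {S : Finset α}
    (h : restrict T S = some u) :
    restrict (node (leaf x) T) (insert x S) = some (node (leaf x) u) := by
  simp [restrict, restrict_insert_of_not_mem hx, h]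

theorem eq_leaf_of_remove_singleton_eq_none {T : LTree α} {x : α} (hT : Good T)
    (h : remove T {x} = none) : T = leaf x := by
  rw [remove_eq_none_iff] at h
  cases T with
  | leaf a => simpa [labels] using h
  | node l r =>
    obtain ⟨y, hy⟩ := labels_nonempty l
    obtain ⟨z, hz⟩ := labels_nonempty r
    have hyx : y = x := Finset.mem_singleton.mp (h (Finset.mem_union_left _ hy))
    have hzx : z = x := Finset.mem_singleton.mp (h (Finset.mem_union_right _ hz))
    subst hyx hzx
    exact absurd hz (Finset.disjoint_left.mp hT.2.2 hy)

theorem LPRStep.labels_eq {x : α} {T T' : LTree α} (h : LPRStep x T T') (hx : x ∈ labels T) :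
    labels T' = labels T := by
  rcases h with ⟨hnone, rfl⟩ | ⟨T₀, p, hT₀, hp⟩
  · exact (Finset.Subset.antisymm (remove_eq_none_iff.mp hnone)
      (Finset.singleton_subset_iff.mpr hx)).symm
  · rw [labels_graftAt hp, labels_remove hT₀, Finset.sdiff_singleton_eq_erase,
      Finset.insert_erase hx]

theorem LPRStep.remove_eq {x : α} {T T' : LTree α} (h : LPRStep x T T') {X : Finset α}
    (hX : x ∈ X) : remove T' X = remove T X := by
  rcases h with ⟨hnone, rfl⟩ | ⟨T₀, p, hT₀, hp⟩
  · rw [remove_eq_none_iff.mpr (by simpa [labels] using hX), remove_eq_none_iff.mpr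
      ((remove_eq_none_iff.mp hnone).trans (Finset.singleton_subset_iff.mpr hX))]
  · rw [remove, labels_graftAt hp, Finset.insert_sdiff_of_mem _ hX,
      restrict_graftAt_of_not_mem hp (by simp [hX]), ← remove, remove_of_remove_eq_some hT₀,
      Finset.union_eq_right.mpr (Finset.singleton_subset_iff.mpr hX)]

theorem LPRStep.exists_not_mem_of_dLR_lt {x : α} {T T' U : LTree α} (h : LPRStep x T T')
    (hx : x ∈ labels T) (hlt : dLR T' U < dLR T U) :
    ∃ X, x ∉ X ∧ #X = dLR T' U ∧ OptIso (remove T' X) (remove U X) := by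
  obtain ⟨X, hXsub, hXcard, hX⟩ := exists_card_eq_dLR T' U
  refine ⟨X, fun hxX => ?_, hXcard, hX⟩
  have : dLR T U ≤ #X := dLR_le (h.labels_eq hx ▸ hXsub) (h.remove_eq hxX ▸ hX)
  omega

theorem LPRStep.good {x : α} {T T' : LTree α} (hT : Good T) (h : LPRStep x T T') : Good T' := by
  rcases h with ⟨-, rfl⟩ | ⟨T₀, p, hT₀, hp⟩
  · trivial
  · exact good_graftAt (good_restrict hT hT₀) (by simp [labels_remove hT₀]) hp

theorem LPRStep.exists_graftAt_of_dLR_lt {x : α} {T T' U : LTree α} (hT : Good T)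
    (h : LPRStep x T T') (hlt : dLR T' U < dLR T U) :
    ∃ T₀ p, remove T {x} = some T₀ ∧ graftAt x T₀ p = some T' := by
  rcases h with ⟨hnone, rfl⟩ | hgraft
  · rw [← eq_leaf_of_remove_singleton_eq_none hT hnone] at hlt
    exact absurd hlt (lt_irrefl _)
  · exact hgraft

def rootCost : LTree α → List Bool → ℕ
  | node l r, true :: q => min #(labels l) (#(labels r) + rootCost l q)
  | node l r, false :: q => min #(labels r) (#(labels l) + rootCost r q)
  | _, _ => 0

/-- `cost T p q` is a lower bound for the number of leaves of `T` to delete before grafting a new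
leaf at address `p` or at `q` gives the same tree (`cost_le_card_of_optIso_remove`). When `p` and
`q` point into different children, one of them is deleted entirely, which lifts the position inside
it to the root of the other child; `rootCost T q` is `cost T [] q`. -/
def cost : LTree α → List Bool → List Bool → ℕ
  | T, [], q => rootCost T q
  | T, p, [] => rootCost T p
  | node l _, true :: p, true :: q => min #(labels l) (cost l p q)
  | node _ r, false :: p, false :: q => min #(labels r) (cost r p q)
  | node l r, true :: p, false :: q =>
    min (#(labels l) + rootCost r q) (#(labels r) + rootCost l p)
  | node l r, false :: p, true :: q =>
    min (#(labels l) + rootCost r p) (#(labels r) + rootCost l q)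
  | leaf _, _, _ => 0

theorem cost_nil_left (T : LTree α) (q : List Bool) : cost T [] q = rootCost T q := by
  cases T <;> cases q <;> rfl

theorem cost_nil_right (T : LTree α) (p : List Bool) : cost T p [] = rootCost T p := by
  cases T <;> cases p <;> rfl

theorem rootCost_le : ∀ (T : LTree α) (q : List Bool), rootCost T q ≤ #(labels T)
  | leaf _, _ => Nat.zero_le _
  | node _ _, [] => Nat.zero_le _
  | node _ _, true :: _ =>
    (min_le_left _ _).trans (Finset.card_le_card Finset.subset_union_left)
  | node _ _, false :: _ =>
    (min_le_left _ _).trans (Finset.card_le_card Finset.subset_union_right)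

theorem cost_comm : ∀ (T : LTree α) (p q : List Bool), cost T p q = cost T q p
  | leaf _, p, q => by rcases p with _ | ⟨_ | _, _⟩ <;> rcases q with _ | ⟨_ | _, _⟩ <;> rfl
  | node _ _, [], [] => rfl
  | node _ _, [], b :: _ | node _ _, b :: _, [] => by cases b <;> rfl
  | node l r, b :: p, c :: q => by
    cases b <;> cases c <;> simp only [cost, cost_comm l p q, cost_comm r p q]

theorem cost_node_flipHead (l r : LTree α) (p q : List Bool) :
    cost (node l r) p q = cost (node r l) (flipHead p) (flipHead q) := by
  rcases p with _ | ⟨_ | _, p⟩ <;> rcases q with _ | ⟨_ | _, q⟩ <;>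
    first | rfl | exact min_comm _ _

theorem card_sdiff_of_restrict_eq_none {T : LTree α} {S : Finset α} (h : restrict T S = none) :
    #(labels T \ S) = #(labels T) := by
  rw [Finset.sdiff_eq_self_of_disjoint (restrict_eq_none_iff.mp h)]

theorem card_labels_node_sdiff {l r : LTree α} (hlr : Disjoint (labels l) (labels r))
    (S : Finset α) : #(labels (node l r) \ S) = #(labels l \ S) + #(labels r \ S) := by
  rw [labels, Finset.union_sdiff_distrib,
    Finset.card_union_of_disjoint (hlr.mono Finset.sdiff_subset Finset.sdiff_subset)]

theorem Iso.not_node_of_disjoint {a b : LTree α} (h : Disjoint (labels a) (labels b)) :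
    ¬ Iso a (.node a b) := by
  intro hab
  have hba : labels b ⊆ labels a := by
    rw [hab.labels_eq, labels]; exact Finset.subset_union_right
  exact (labels_nonempty b).ne_empty
    ((Finset.disjoint_self_iff_empty _).mp (h.mono_left hba).symm)

def CostBoundAt (x : α) (S : Finset α) (T : LTree α) (p q : List Bool) : Prop :=
  ∀ ⦃Gp Gq : LTree α⦄, graftAt x T p = some Gp → graftAt x T q = some Gq →
    OptIso (restrict Gp (insert x S)) (restrict Gq (insert x S)) → cost T p q ≤ #(labels T \ S)

section

variable {x : α} {S : Finset α}

theorem CostBoundAt.symm {T : LTree α} {p q : List Bool} (h : CostBoundAt x S T p q) :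
    CostBoundAt x S T q p :=
  fun _ _ hq hp hiso => cost_comm T q p ▸ h hp hq hiso.symm

theorem CostBoundAt.of_node_swap {l r : LTree α} {p q : List Bool}
    (h : CostBoundAt x S (node r l) (flipHead p) (flipHead q)) :
    CostBoundAt x S (node l r) p q := by
  intro Gp Gq hp hq hiso
  obtain ⟨Gp', hp', hGp⟩ := graftAt_node_flipHead hp
  obtain ⟨Gq', hq', hGq⟩ := graftAt_node_flipHead hq
  have := h hp' hq' (((hGp.restrict _).symm.trans hiso).trans (hGq.restrict _))
  rw [← cost_node_flipHead] at this
  simpa only [labels, Finset.union_comm] using this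

theorem costBoundAt_node_false_false {l r : LTree α} (hr : ∀ p q, CostBoundAt x S r p q)
    (hlr : Disjoint (labels l) (labels r)) (hxl : x ∉ labels l) (p q : List Bool) :
    CostBoundAt x S (node l r) (false :: p) (false :: q) := by
  intro Gp Gq hp hq hiso
  obtain ⟨rp, hrp, rfl⟩ := graftAt_node_false hp
  obtain ⟨rq, hrq, rfl⟩ := graftAt_node_false hq
  obtain ⟨gp, hgp, -⟩ := exists_restrict_graftAt_insert hrp S
  obtain ⟨gq, hgq, hxgq⟩ := exists_restrict_graftAt_insert hrq S
  have hiso_r : Iso gp gq := by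
    rcases hL : restrict l S with _ | l₀ <;>
      simp only [restrict, restrict_insert_of_not_mem hxl, hL, hgp, hgq] at hiso
    · exact hiso
    · cases (hiso : Iso (node l₀ gp) (node l₀ gq)) with
      | node _ h => exact h
      | swap h _ => exact absurd h.symm (Iso.not_of_mem_of_not_mem hxgq
          fun hx => hxl (labels_subset_of_restrict hL hx))
  have := hr p q hrp hrq (by rw [hgp, hgq]; exact hiso_r)
  have := card_labels_node_sdiff hlr S
  have : cost (node l r) (false :: p) (false :: q) ≤ cost r p q := min_le_right _ _
  omega

theorem costBoundAt_node_false_nil {l r : LTree α} (hr : ∀ p q, CostBoundAt x S r p q)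
    (hlr : Disjoint (labels l) (labels r)) (hxl : x ∉ labels l) (hxr : x ∉ labels r)
    (p : List Bool) : CostBoundAt x S (node l r) (false :: p) [] := by
  intro Gp Gq hp hq hiso
  obtain ⟨rp, hrp, rfl⟩ := graftAt_node_false hp
  cases hq
  obtain ⟨gp, hgp, -⟩ := exists_restrict_graftAt_insert hrp S
  have hcard := card_labels_node_sdiff hlr S
  have hcost : cost (node l r) (false :: p) [] = min #(labels r) (#(labels l) + rootCost r p) :=
    rfl
  rcases hR : restrict r S with _ | r₀
  · have := card_sdiff_of_restrict_eq_none hR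
    omega
  rcases hL : restrict l S with _ | l₀ <;>
    simp only [restrict, restrict_insert_of_not_mem hxl, restrict_insert_of_not_mem hxr, hL, hR,
      hgp, Finset.mem_insert_self, if_true] at hiso
  · have hrp_root := hr p [] hrp (graftAt_nil x r)
      (by rw [hgp, restrict_insert_node_leaf hxr hR]; exact hiso)
    rw [cost_nil_right] at hrp_root
    have := card_sdiff_of_restrict_eq_none hL
    omega
  · cases (hiso : Iso (node l₀ gp) (node (leaf x) (node l₀ r₀))) with
    | node h _ => exact absurd h.symm (Iso.not_of_mem_of_not_mem (Finset.mem_singleton_self x)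
        fun hx => hxl (labels_subset_of_restrict hL hx))
    | swap h _ => exact absurd h (Iso.not_node_of_disjoint
        (hlr.mono (labels_subset_of_restrict hL) (labels_subset_of_restrict hR)))

theorem costBoundAt_node_false_true {l r : LTree α} (hl : ∀ p q, CostBoundAt x S l p q)
    (hr : ∀ p q, CostBoundAt x S r p q) (hlr : Disjoint (labels l) (labels r))
    (hxl : x ∉ labels l) (hxr : x ∉ labels r) (p q : List Bool) :
    CostBoundAt x S (node l r) (false :: p) (true :: q) := by
  intro Gp Gq hp hq hiso
  obtain ⟨rp, hrp, rfl⟩ := graftAt_node_false hp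
  obtain ⟨lq, hlq, rfl⟩ := graftAt_node_true hq
  have hcard := card_labels_node_sdiff hlr S
  have hcost : cost (node l r) (false :: p) (true :: q) =
      min (#(labels l) + rootCost r p) (#(labels r) + rootCost l q) := rfl
  rcases hL : restrict l S with _ | l₀ <;> rcases hR : restrict r S with _ | r₀
  · have := card_sdiff_of_restrict_eq_none hL
    have := card_sdiff_of_restrict_eq_none hR
    have := rootCost_le r p
    omega
  · obtain ⟨gp, hgp, -⟩ := exists_restrict_graftAt_insert hrp S
    simp only [restrict, restrict_insert_of_not_mem hxl, restrict_insert_of_not_mem hxr, hL, hR,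
      hgp, restrict_graftAt_insert_of_disjoint hlq hxl (restrict_eq_none_iff.mp hL)] at hiso
    have hroot := hr p [] hrp (graftAt_nil x r)
      (by rw [hgp, restrict_insert_node_leaf hxr hR]; exact hiso)
    rw [cost_nil_right] at hroot
    have := card_sdiff_of_restrict_eq_none hL
    omega
  · obtain ⟨gq, hgq, -⟩ := exists_restrict_graftAt_insert hlq S
    simp only [restrict, restrict_insert_of_not_mem hxl, restrict_insert_of_not_mem hxr, hL, hR,
      hgq, restrict_graftAt_insert_of_disjoint hrp hxr (restrict_eq_none_iff.mp hR)] at hiso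
    have hroot := hl [] q (graftAt_nil x l) hlq (by
      rw [restrict_insert_node_leaf hxl hL, hgq]
      exact (Iso.swap (.refl _) (.refl _)).trans (hiso : Iso (node l₀ (leaf x)) gq))
    rw [cost_nil_left] at hroot
    have := card_sdiff_of_restrict_eq_none hR
    omega
  · obtain ⟨gp, hgp, -⟩ := exists_restrict_graftAt_insert hrp S
    obtain ⟨gq, hgq, hxgq⟩ := exists_restrict_graftAt_insert hlq S
    simp only [restrict, restrict_insert_of_not_mem hxl, restrict_insert_of_not_mem hxr, hL, hR,
      hgp, hgq] at hiso
    cases (hiso : Iso (node l₀ gp) (node gq r₀)) with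
    | node h _ => exact absurd h.symm (Iso.not_of_mem_of_not_mem hxgq
        fun hx => hxl (labels_subset_of_restrict hL hx))
    | swap h _ => exact absurd h (Iso.not_of_disjoint
        (hlr.mono (labels_subset_of_restrict hL) (labels_subset_of_restrict hR)))

theorem costBoundAt_node_false {l r : LTree α} (hl : ∀ p q, CostBoundAt x S l p q)
    (hr : ∀ p q, CostBoundAt x S r p q) (hlr : Disjoint (labels l) (labels r))
    (hxl : x ∉ labels l) (hxr : x ∉ labels r) (p : List Bool) :
    ∀ q, CostBoundAt x S (node l r) (false :: p) q
  | [] => costBoundAt_node_false_nil hr hlr hxl hxr p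
  | false :: q => costBoundAt_node_false_false hr hlr hxl p q
  | true :: q => costBoundAt_node_false_true hl hr hlr hxl hxr p q

theorem costBoundAt_node_cons {l r : LTree α} (hl : ∀ p q, CostBoundAt x S l p q)
    (hr : ∀ p q, CostBoundAt x S r p q) (hlr : Disjoint (labels l) (labels r))
    (hxl : x ∉ labels l) (hxr : x ∉ labels r) :
    ∀ (b : Bool) (p q : List Bool), CostBoundAt x S (node l r) (b :: p) q
  | false, p, q => costBoundAt_node_false hl hr hlr hxl hxr p q
  | true, p, q => .of_node_swap (costBoundAt_node_false hr hl hlr.symm hxr hxl p (flipHead q))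

theorem costBoundAt_of_good {T : LTree α} (hT : Good T) (hx : x ∉ labels T) :
    ∀ p q, CostBoundAt x S T p q := by
  induction T with
  | leaf a =>
    intro p q _ _ _ _ _
    rcases p with _ | ⟨_ | _, _⟩ <;> rcases q with _ | ⟨_ | _, _⟩ <;> exact Nat.zero_le _
  | node l r ihl ihr =>
    obtain ⟨gl, gr, hlr⟩ := hT
    simp only [labels, Finset.mem_union, not_or] at hx
    have hl := ihl gl hx.1
    have hr := ihr gr hx.2
    rintro (_ | ⟨b, p⟩) q
    · rcases q with _ | ⟨c, q⟩
      · intro _ _ _ _ _; exact Nat.zero_le _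
      · exact (costBoundAt_node_cons hl hr hlr hx.1 hx.2 c q []).symm
    · exact costBoundAt_node_cons hl hr hlr hx.1 hx.2 b p q

theorem cost_le_card_of_optIso_remove {T Gp Gq : LTree α} {p q : List Bool} {Z : Finset α}
    (hT : Good T) (hx : x ∉ labels T) (hp : graftAt x T p = some Gp)
    (hq : graftAt x T q = some Gq) (hxZ : x ∉ Z) (h : OptIso (remove Gp Z) (remove Gq Z)) :
    cost T p q ≤ #Z := by
  rw [remove, remove, labels_graftAt hp, labels_graftAt hq, Finset.insert_sdiff_of_notMem _ hxZ]
    at h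
  calc cost T p q ≤ #(labels T \ (labels T \ Z)) := costBoundAt_of_good hT hx p q hp hq h
    _ ≤ #Z := by
      rw [Finset.sdiff_sdiff_self_left]; exact Finset.card_le_card Finset.inter_subset_right

end

theorem card_addresses_add_one_le {T : LTree α} (hT : Good T) :
    #(addresses T) + 1 ≤ 2 * #(labels T) := by
  induction T with
  | leaf a => simp [addresses, labels]
  | node l r ihl ihr =>
    obtain ⟨gl, gr, hlr⟩ := hT
    have := card_filter_addresses_node l r fun _ => True
    simp only [Finset.filter_true, if_true] at this
    rw [labels, Finset.card_union_of_disjoint hlr]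
    have := ihl gl
    have := ihr gr
    omega

theorem card_filter_rootCost_le {T : LTree α} (hT : Good T) (m : ℕ) :
    #((addresses T).filter (rootCost T · ≤ m)) ≤ 4 * m + 1 := by
  induction T generalizing m with
  | leaf a => exact (Finset.card_filter_le _ _).trans (by simp [addresses])
  | node l r ihl ihr =>
    obtain ⟨gl, gr, hlr⟩ := hT
    have key := card_filter_addresses_node l r (rootCost (node l r) · ≤ m)
    have hl : #((addresses l).filter fun q => rootCost (node l r) (true :: q) ≤ m) ≤ _ :=
      Finset.card_filter_min_add_le _ _ _ _ _
    have hr : #((addresses r).filter fun q => rootCost (node l r) (false :: q) ≤ m) ≤ _ :=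
      Finset.card_filter_min_add_le _ _ _ _ _
    have := ihl gl (m - #(labels r))
    have := ihr gr (m - #(labels l))
    have := card_addresses_add_one_le gl
    have := card_addresses_add_one_le gr
    split_ifs at key hl hr <;> omega

theorem card_filter_cost_node_flipHead (l r : LTree α) (p : List Bool) (m : ℕ) :
    #((addresses (node l r)).filter (cost (node l r) p · ≤ m)) =
      #((addresses (node r l)).filter (cost (node r l) (flipHead p) · ≤ m)) := by
  rw [addresses_node_swap l r, Finset.filter_image,
    Finset.card_image_of_injective _ flipHead_injective]
  simp only [← cost_node_flipHead]

theorem card_filter_cost_node_false_le {l r : LTree α} (gl : Good l) (gr : Good r)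
    {p : List Bool} {m : ℕ}
    (ihr : #((addresses r).filter (cost r p · ≤ m)) ≤ 5 * m + 3 + 2 * min (rootCost r p) m) :
    #((addresses (node l r)).filter (cost (node l r) (false :: p) · ≤ m)) ≤
      5 * m + 3 + 2 * min (rootCost (node l r) (false :: p)) m := by
  have key := card_filter_addresses_node l r (cost (node l r) (false :: p) · ≤ m)
  have hl : #((addresses l).filter fun q => cost (node l r) (false :: p) (true :: q) ≤ m) ≤ _ :=
    Finset.card_filter_min_add_le _ _ _ _ _
  have hr : #((addresses r).filter fun q => cost (node l r) (false :: p) (false :: q) ≤ m) ≤ _ :=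
    Finset.card_filter_min_le _ _ _ _
  have := card_filter_rootCost_le gl (m - #(labels r))
  have := card_addresses_add_one_le gl
  have := card_addresses_add_one_le gr
  have : cost (node l r) (false :: p) [] = min #(labels r) (#(labels l) + rootCost r p) := rfl
  have : rootCost (node l r) (false :: p) = min #(labels r) (#(labels l) + rootCost r p) := rfl
  split_ifs at key hl hr <;> omega

/-- The `min` term telescopes: the addresses inside a subtree `l` hanging off the path to `p` are
counted only where `rootCost` grows by `#(labels l)`, which pays for their number
`2 * #(labels l) - 1`. -/
theorem card_filter_cost_le {T : LTree α} (hT : Good T) (p : List Bool) (m : ℕ) :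
    #((addresses T).filter (cost T p · ≤ m)) ≤ 5 * m + 3 + 2 * min (rootCost T p) m := by
  induction T generalizing p with
  | leaf a => exact (Finset.card_filter_le _ _).trans (by simp [addresses]; omega)
  | node l r ihl ihr =>
    have hroot := card_filter_rootCost_le hT m
    obtain ⟨gl, gr, -⟩ := hT
    rcases p with _ | ⟨_ | _, p⟩
    · simp only [cost_nil_left]
      omega
    · exact card_filter_cost_node_false_le gl gr (ihr gr p)
    · rw [card_filter_cost_node_flipHead]
      exact card_filter_cost_node_false_le gr gl (ihl gl p)

theorem cost_le_dLR_add_dLR {x : α} {T T₀ U Gp Gq : LTree α} {p q : List Bool} (hT : Good T)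
    (hx : x ∈ labels T) (hU : labels U = labels T) (hT₀ : remove T {x} = some T₀)
    (hp : graftAt x T₀ p = some Gp) (hq : graftAt x T₀ q = some Gq)
    (hpU : dLR Gp U < dLR T U) (hqU : dLR Gq U < dLR T U) :
    cost T₀ p q ≤ dLR Gp U + dLR Gq U := by
  have hstep_p : LPRStep x T Gp := .inr ⟨T₀, p, hT₀, hp⟩
  have hstep_q : LPRStep x T Gq := .inr ⟨T₀, q, hT₀, hq⟩
  obtain ⟨X, hxX, hX, hXiso⟩ := hstep_p.exists_not_mem_of_dLR_lt hx hpU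
  obtain ⟨Y, hxY, hY, hYiso⟩ := hstep_q.exists_not_mem_of_dLR_lt hx hqU
  have hiso : OptIso (remove Gp (X ∪ Y)) (remove Gq (X ∪ Y)) :=
    (hXiso.remove_mono ((hstep_p.labels_eq hx).trans hU.symm) Finset.subset_union_left).trans
      (hYiso.remove_mono ((hstep_q.labels_eq hx).trans hU.symm) Finset.subset_union_right).symm
  calc cost T₀ p q ≤ #(X ∪ Y) :=
        cost_le_card_of_optIso_remove (good_restrict hT hT₀) (by simp [labels_remove hT₀]) hp hq
          (by simp [hxX, hxY]) hiso
    _ ≤ dLR Gp U + dLR Gq U := hX ▸ hY ▸ Finset.card_union_le X Y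

def candidates [DecidableEq (LTree α)] (x : α) (T₀ : LTree α) (q₀ : List Bool) (m : ℕ) :
    Finset (LTree α) :=
  ((addresses T₀).filter (cost T₀ q₀ · ≤ m)).biUnion fun q => (graftAt x T₀ q).toFinset

variable [DecidableEq (LTree α)] {x : α} {T₀ : LTree α} {q₀ : List Bool} {m : ℕ}

theorem card_candidates_le (hT₀ : Good T₀) (x : α) (q₀ : List Bool) (m : ℕ) :
    #(candidates x T₀ q₀ m) ≤ 7 * m + 3 := by
  have hcard := card_filter_cost_le hT₀ q₀ m
  have := Finset.card_biUnion_le_card_mul ((addresses T₀).filter (cost T₀ q₀ · ≤ m))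
    (fun q => (graftAt x T₀ q).toFinset) 1 fun q _ => by
      rw [Option.card_toFinset]; cases graftAt x T₀ q <;> simp
  have := min_le_right (rootCost T₀ q₀) m
  rw [candidates]
  omega

theorem mem_candidates {p : List Bool} {G : LTree α} (hp : graftAt x T₀ p = some G)
    (hcost : cost T₀ q₀ p ≤ m) : G ∈ candidates x T₀ q₀ m :=
  Finset.mem_biUnion.mpr
    ⟨p, Finset.mem_filter.mpr ⟨mem_addresses_of_graftAt hp, hcost⟩, by simp [hp]⟩

theorem exists_graftAt_of_mem_candidates {G : LTree α} (hG : G ∈ candidates x T₀ q₀ m) :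
    ∃ p, graftAt x T₀ p = some G := by
  obtain ⟨p, -, hp⟩ := Finset.mem_biUnion.mp hG
  exact ⟨p, Option.mem_toFinset.mp hp⟩

end LTree

open LTree

theorem candidate_trees_exist_general {α : Type u} [DecidableEq α]
    (𝒳 : Finset α) (T₁ Tstar : LTree α) (d d' : ℕ)
    (h₁ : IsTreeOn T₁ 𝒳) (hstar : IsTreeOn Tstar 𝒳)
    (X₁ X₂ : Finset α) (hX₁ : X₁ ⊆ 𝒳)
    (e₁ : OptIso (remove T₁ X₁) (remove Tstar X₁))
    (hc₁ : X₁.card ≤ d')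
    (x : α) (hx : x ∈ X₁ \ X₂) :
    ∃ P : Finset (LTree α), P.card ≤ 18 * (d + d') + 8 ∧
      (∀ T ∈ P, IsTreeOn T 𝒳) ∧
      ∀ T' : LTree α, LPRStep x T₁ T' → dLR T' Tstar < dLR T₁ Tstar →
        ∃ T'' ∈ P, Iso T' T'' := by
  classical
  obtain ⟨hgood, rfl⟩ := h₁
  have hxT : x ∈ labels T₁ := hX₁ (Finset.mem_sdiff.mp hx).1
  have hd : dLR T₁ Tstar ≤ d' :=
    (dLR_le (by rw [hstar.2, Finset.union_self]; exact hX₁) e₁).trans hc₁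
  by_cases himp : ∃ T', LPRStep x T₁ T' ∧ dLR T' Tstar < dLR T₁ Tstar
  swap
  · exact ⟨∅, by simp, by simp, fun T' hT' hlt => (himp ⟨T', hT', hlt⟩).elim⟩
  obtain ⟨T'₀, hstep₀, hlt₀⟩ := himp
  obtain ⟨T₀, q₀, hT₀, hq₀⟩ := hstep₀.exists_graftAt_of_dLR_lt hgood hlt₀
  refine ⟨candidates x T₀ q₀ (2 * d'), ?_, fun T hT => ?_, fun T' hstep hlt => ?_⟩
  · have := card_candidates_le (good_restrict hgood hT₀) x q₀ (2 * d')
    omega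
  · obtain ⟨p, hp⟩ := exists_graftAt_of_mem_candidates hT
    have hstep : LPRStep x T₁ T := .inr ⟨T₀, p, hT₀, hp⟩
    exact ⟨hstep.good hgood, hstep.labels_eq hxT⟩
  · obtain ⟨T₀', p, hT₀', hp⟩ := hstep.exists_graftAt_of_dLR_lt hgood hlt
    obtain rfl : T₀' = T₀ := Option.some.inj (hT₀'.symm.trans hT₀)
    have := cost_le_dLR_add_dLR hgood hxT hstar.2 hT₀ hq₀ hp hlt₀ hlt
    exact ⟨T', mem_candidates hp (by omega), Iso.refl T'⟩

/-- Lemma 19 of the paper: candidate trees.  Under the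
hypotheses of Statement 14, for `x ∈ X₁ \ X₂` there is a set `P` of at most
`18(d + d') + 8` trees on `𝒳` containing every tree `T'` with
`d_LR(T',T*) < d_LR(T₁,T*)` obtainable from `T₁` by pruning the leaf `x` and
regrafting it. -/
theorem candidate_trees_exist {α : Type u} [DecidableEq α]
    (𝒳 : Finset α) (T₁ T₂ Tstar : LTree α) (d d' : ℕ) (hdd : d' ≤ d)
    (h₁ : IsTreeOn T₁ 𝒳) (h₂ : IsTreeOn T₂ 𝒳) (hstar : IsTreeOn Tstar 𝒳)
    (hlow : d < dLR T₁ T₂) (hhigh : dLR T₁ T₂ ≤ d' + d)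
    (X₁ X₂ : Finset α) (hX₁ : X₁ ⊆ 𝒳) (hX₂ : X₂ ⊆ 𝒳)
    (e₁ : OptIso (remove T₁ X₁) (remove Tstar X₁))
    (e₂ : OptIso (remove T₂ X₂) (remove Tstar X₂))
    (hc₁ : X₁.card ≤ d') (hc₂ : X₂.card ≤ d)
    (x : α) (hx : x ∈ X₁ \ X₂) :
    ∃ P : Finset (LTree α), P.card ≤ 18 * (d + d') + 8 ∧
      (∀ T ∈ P, IsTreeOn T 𝒳) ∧
      ∀ T' : LTree α, LPRStep x T₁ T' → dLR T' Tstar < dLR T₁ Tstar →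
        ∃ T'' ∈ P, Iso T' T'' :=
  candidate_trees_exist_general 𝒳 T₁ Tstar d d' h₁ hstar X₁ X₂ hX₁ e₁ hc₁ x hx
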